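/- arXiv:2503.06826 — 4 statements merged into one kernel-verified Lean document; each statement's English description precedes it below -/
import Mathlib

section
/- There is an absolute constant n₀ such that the following holds: if G is a graph on n ≥ n₀ vertices with average degree d > 1 (i.e. 2|E(G)|/n = d), and m = 6n·ln(d+2)/ln n, then G is not m-minor-universal; in fact there exists a graph H with at most m vertices and at most m edges which is not a minor of G. -/
/-!
Let `s = ⌊m⌋`. If `s > n`, the edgeless graph on `n + 1` vertices is not a minor of `G`, as the
branch sets are disjoint and nonempty. Otherwise take `k ≈ 6 s / ln n` vertices and count. As far
as `H` is concerned, a minor model of a graph `H` on `k` vertices is determined by a spanning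
forest of its branch sets (at most `n` edges of `G`), one dart of `G` per edge of `H`, and a root
in each branch set. Hence at most `C(E + n, n) · C(2E + s, s) · n ^ k` of the `C(C(k, 2), s)`
graphs with `s` edges on `k` labelled vertices are minors of `G`, and for large `n` this is fewer.
-/

open Finset

/-- `H` is a minor of `G`: there are disjoint branch sets, one for each vertex of `H`,
each inducing a connected subgraph of `G`, with an edge of `G` between the branch sets of
any two adjacent vertices of `H`. -/
def IsMinor {W V : Type} (H : SimpleGraph W) (G : SimpleGraph V) : Prop :=
  ∃ f : W → Set V,
    (∀ h h', h ≠ h' → Disjoint (f h) (f h')) ∧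
    (∀ h, (G.induce (f h)).Connected) ∧
    (∀ h h', H.Adj h h' → ∃ u ∈ f h, ∃ v ∈ f h', G.Adj u v)

open Function Real SimpleGraph

theorem Nat.sum_range_choose_le_add_choose (n t : ℕ) :
    ∑ i ∈ range (t + 1), n.choose i ≤ (n + t).choose t := by
  induction t with
  | zero => simp
  | succ t ih =>
    rw [sum_range_succ, ← add_assoc, Nat.choose_succ_succ' (n + t)]
    exact Nat.add_le_add ih (Nat.choose_le_choose _ (by omega))

theorem Finset.card_filter_powerset_card_le {α : Type*} [DecidableEq α] (S : Finset α)
    (t : ℕ) :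
    #(S.powerset.filter (#· ≤ t)) ≤ (#S + t).choose t := by
  calc #(S.powerset.filter (#· ≤ t))
      ≤ #((range (t + 1)).biUnion fun i => S.powersetCard i) := by
        refine card_le_card fun F hF => ?_
        rw [mem_filter, mem_powerset] at hF
        exact mem_biUnion.2
          ⟨#F, mem_range.2 (Nat.lt_succ_of_le hF.2), mem_powersetCard.2 ⟨hF.1, rfl⟩⟩
    _ ≤ ∑ i ∈ range (t + 1), #(S.powersetCard i) := card_biUnion_le
    _ = ∑ i ∈ range (t + 1), (#S).choose i := by simp only [card_powersetCard]
    _ ≤ (#S + t).choose t := Nat.sum_range_choose_le_add_choose _ _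

theorem Nat.choose_le_exp_mul_one_add_log {N t : ℕ} {x : ℝ} (h : (N : ℝ) ≤ t * x) :
    (N.choose t : ℝ) ≤ Real.exp (t * (1 + Real.log x)) := by
  rcases Nat.eq_zero_or_pos t with rfl | ht
  · simp
  rcases Nat.eq_zero_or_pos N with rfl | hN
  · simp [Nat.choose_eq_zero_of_lt ht, (exp_pos _).le]
  have ht' : (0 : ℝ) < t := by exact_mod_cast ht
  have hx : 0 < x := pos_of_mul_pos_right ((Nat.cast_pos.2 hN).trans_le h) ht'.le
  calc (N.choose t : ℝ) ≤ (N : ℝ) ^ t / t.factorial := Nat.choose_le_pow_div t N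
    _ ≤ (t * x) ^ t / t.factorial := by gcongr
    _ = x ^ t * ((t : ℝ) ^ t / t.factorial) := by ring
    _ ≤ x ^ t * Real.exp t := by gcongr; exact pow_div_factorial_le_exp _ ht'.le t
    _ = Real.exp (t * (1 + Real.log x)) := by
      rw [mul_one_add, exp_add, exp_nat_mul, exp_log hx, mul_comm]

theorem Nat.exp_mul_log_le_choose {N t : ℕ} {x : ℝ} (hx : 0 < x) (h : t * x + t ≤ N + 1) :
    Real.exp (t * Real.log x) ≤ N.choose t := by
  rcases Nat.eq_zero_or_pos t with rfl | ht
  · simp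
  have ht' : (0 : ℝ) < t := by exact_mod_cast ht
  have htN : t ≤ N + 1 := by
    have : (t : ℝ) ≤ N + 1 := by nlinarith
    exact_mod_cast this
  calc Real.exp (t * Real.log x) = (t * x) ^ t / (t : ℝ) ^ t := by
        rw [exp_nat_mul, exp_log hx, mul_pow, mul_div_cancel_left₀ _ (by positivity)]
    _ ≤ ((N + 1 - t : ℕ) : ℝ) ^ t / t.factorial := by
        gcongr
        · push_cast [htN]; linarith
        · exact_mod_cast Nat.factorial_le_pow t
    _ ≤ N.choose t := Nat.pow_le_choose t N

theorem exp_mul_log_le_choose_choose_two {k s : ℕ} {L : ℝ} (hL : 0 < L) (hs : L ^ 2 ≤ 2 * s)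
    (hk : 6 * s / L + 1 ≤ k) :
    exp (s * log (s / L ^ 2)) ≤ (k.choose 2).choose s := by
  have hs0 : (0 : ℝ) < s := by nlinarith
  have hk2 : 18 * (s ^ 2 / L ^ 2) ≤ (k.choose 2 : ℝ) := by
    rw [Nat.cast_choose_two]
    have : (6 * s / L) ^ 2 ≤ k * (k - 1) := by nlinarith [(by positivity : 0 ≤ 6 * s / L)]
    calc 18 * ((s : ℝ) ^ 2 / L ^ 2) = (6 * s / L) ^ 2 / 2 := by ring
      _ ≤ _ := by gcongr
  refine Nat.exp_mul_log_le_choose (by positivity) ?_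
  have : (s : ℝ) ≤ 2 * (s ^ 2 / L ^ 2) := by
    rw [← mul_div_assoc, le_div_iff₀ (by positivity)]; nlinarith
  have : 0 ≤ (s : ℝ) ^ 2 / L ^ 2 := by positivity
  calc (s : ℝ) * (s / L ^ 2) + s = s ^ 2 / L ^ 2 + s := by ring
    _ ≤ _ := by linarith

theorem counting_exponent_lt {n s k d L : ℝ} (hL : 10000 ≤ L) (hsq : L ^ 2 ≤ 2 * s)
    (hsL : 5 * n ≤ s * L) (hlogd : log (d + 2) < L / 3)
    (hs : 6 * n * log (d + 2) < (s + 1) * L) (hk : k ≤ 6 * s / L + 2)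
    (hlogs : L - log L ≤ log s) :
    n * (1 + log (d + 2)) + s * (1 + (log (d + 2) + log L)) + k * L <
      s * (log s - 2 * log L) := by
  have hs0 : 0 < s := by nlinarith
  have hlogL : log L ≤ L / 50 := by
    rw [log_le_iff_le_exp (by linarith)]
    have := pow_div_factorial_le_exp (L / 50) (by linarith) 2
    norm_num [Nat.factorial] at this; nlinarith
  have hkL : k * L ≤ 6 * s + 2 * L := by
    have := mul_le_mul_of_nonneg_right hk (by linarith : 0 ≤ L)
    rwa [add_mul, div_mul_cancel₀ _ (by linarith)] at this
  have hslogd := mul_le_mul_of_nonneg_left hlogd.le hs0.le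
  have hslogL := mul_le_mul_of_nonneg_left hlogL hs0.le
  have hslogs := mul_le_mul_of_nonneg_left hlogs hs0.le
  have hsL' := mul_le_mul_of_nonneg_left hL hs0.le
  have hLs : 20 * L ≤ s * L := mul_le_mul_of_nonneg_right (by nlinarith) (by linarith)
  -- the left side is at most `(7/10 + o(1)) s L`, the right side at least `(1 - o(1)) s L`
  linarith

theorem choose_mul_choose_mul_pow_lt {n E s k : ℕ} {d : ℝ} (hd : 1 < d)
    (hE : 2 * (E : ℝ) = d * n) (hL : 10000 ≤ log n) (hsn : s ≤ n)
    (hs : 6 * n * log (d + 2) < (s + 1) * log n) (hk : 6 * s / log n + 1 ≤ k)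
    (hk' : (k : ℝ) ≤ 6 * s / log n + 2) :
    (E + n).choose n * (2 * E + s).choose s * n ^ k < (k.choose 2).choose s := by
  generalize hLdef : log n = L at hL hs hk hk'
  have hn0 : (0 : ℝ) < n := (log_pos_iff (by positivity)).1 (by linarith) |>.trans' one_pos
  have hn : (n : ℝ) = exp L := hLdef ▸ (exp_log hn0).symm
  have hsn' : (s : ℝ) ≤ n := by exact_mod_cast hsn
  have hlogd : 1 < log (d + 2) := by
    rw [lt_log_iff_exp_lt (by linarith)]; linarith [exp_one_lt_d9]
  have hLn : L ≤ n := hLdef ▸ (log_le_sub_one_of_pos hn0).trans (by linarith)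
  have hsL : 5 * n ≤ s * L := by nlinarith
  have hcube : L ^ 3 ≤ 6 * n := by
    have := pow_div_factorial_le_exp L (by linarith) 3
    rw [hn]; norm_num [Nat.factorial] at this; linarith
  have hsq : L ^ 2 ≤ 2 * s := by nlinarith
  have hs0 : (0 : ℝ) < s := by nlinarith
  have hlogs : L - log L ≤ log s := by
    have : log n ≤ log (s * L) := log_le_log hn0 (by linarith)
    rw [hLdef, log_mul hs0.ne' (by linarith)] at this; linarith
  have hforest : ((E + n).choose n : ℝ) ≤ exp (n * (1 + log (d + 2))) :=
    Nat.choose_le_exp_mul_one_add_log (by push_cast; nlinarith)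
  have hconnector : ((2 * E + s).choose s : ℝ) ≤ exp (s * (1 + (log (d + 2) + log L))) := by
    rw [← log_mul (by linarith) (by linarith)]
    exact Nat.choose_le_exp_mul_one_add_log (by push_cast; nlinarith)
  have hroots : (n : ℝ) ^ k = exp (k * L) := by rw [hn, exp_nat_mul]
  have hchoose := exp_mul_log_le_choose_choose_two (by linarith) hsq hk
  rw [log_div hs0.ne' (by positivity), log_pow, Nat.cast_ofNat] at hchoose
  have hlt : ((E + n).choose n : ℝ) * (2 * E + s).choose s * n ^ k < (k.choose 2).choose s :=
    calc ((E + n).choose n : ℝ) * (2 * E + s).choose s * n ^ k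
        ≤ exp (n * (1 + log (d + 2))) * exp (s * (1 + (log (d + 2) + log L))) *
            exp (k * L) := by
          rw [hroots]; gcongr
      _ = exp (n * (1 + log (d + 2)) + s * (1 + (log (d + 2) + log L)) + k * L) := by
          rw [exp_add, exp_add]
      _ < exp (s * (log s - 2 * log L)) :=
          exp_lt_exp.2 (counting_exponent_lt hL hsq hsL (by nlinarith) hs hk' hlogs)
      _ ≤ _ := hchoose
  exact_mod_cast hlt

variable {V W : Type}

namespace SimpleGraph

theorem IsAcyclic.card_edgeFinset_le [Fintype V] {G : SimpleGraph V} [Fintype G.edgeSet]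
    (hG : G.IsAcyclic) : #G.edgeFinset ≤ Fintype.card V := by
  classical
  cases isEmpty_or_nonempty V
  · simp [edgeFinset_eq_empty.2 (Subsingleton.elim G ⊥)]
  obtain ⟨T, hGT, -, hT⟩ := connected_top.exists_isTree_le_of_le_of_isAcyclic le_top hG
  calc #G.edgeFinset ≤ #T.edgeFinset := card_le_card (edgeFinset_mono hGT)
    _ ≤ Fintype.card V := by rw [← hT.card_edgeFinset]; omega

theorem exists_isAcyclic_reachable_iff_mem {G : SimpleGraph V} {f : W → Set V}
    (hdisj : Pairwise (Disjoint on f)) (hconn : ∀ h, (G.induce (f h)).Connected)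
    {root : W → V} (hroot : ∀ h, root h ∈ f h) :
    ∃ T ≤ G, T.IsAcyclic ∧ ∀ h u, T.Reachable (root h) u ↔ u ∈ f h := by
  let B : SimpleGraph V :=
    { Adj u v := G.Adj u v ∧ ∃ h, u ∈ f h ∧ v ∈ f h
      symm := ⟨fun _ _ ⟨huv, h, hu, hv⟩ => ⟨huv.symm, h, hv, hu⟩⟩
      loopless := ⟨fun _ huu => huu.1.ne rfl⟩ }
  obtain ⟨T, hTB, hT, hTreach⟩ := B.exists_isAcyclic_reachable_eq_le
  refine ⟨T, fun u v huv => (hTB huv).1, hT, fun h u => ?_⟩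
  rw [hTreach]
  constructor
  · rw [reachable_iff_reflTransGen]
    intro hr
    induction hr with
    | refl => exact hroot h
    | tail _ hbc ih =>
      obtain ⟨-, h', hb, hc⟩ := hbc
      obtain rfl : h' = h := by_contra fun hne => Set.disjoint_left.1 (hdisj hne) hb ih
      exact hc
  · intro hu
    obtain ⟨p⟩ := hconn h ⟨root h, hroot h⟩ ⟨u, hu⟩
    let φ : G.induce (f h) →g B := ⟨Subtype.val, fun {a b} hab => ⟨hab, h, a.2, b.2⟩⟩
    exact ⟨p.map φ⟩

/-- The graph on the branch sets of a minor model, recorded by a forest `T` whose trees through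
the roots are the branch sets and a set `C` of darts of `G` realising the edges between them. -/
def branchGraph {G : SimpleGraph V} (T : SimpleGraph V) (C : Set G.Dart) (root : W → V) :
    SimpleGraph W :=
  fromRel fun h h' => ∃ c ∈ C, T.Reachable (root h) c.fst ∧ T.Reachable (root h') c.snd

end SimpleGraph

theorem IsMinor.card_le [Fintype V] [Fintype W] {H : SimpleGraph W} {G : SimpleGraph V}
    (hm : IsMinor H G) : Fintype.card W ≤ Fintype.card V := by
  obtain ⟨f, hdisj, hconn, -⟩ := hm
  choose root hroot using fun h => Set.nonempty_coe_sort.1 (hconn h).nonempty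
  refine Fintype.card_le_of_injective root fun a b hab => ?_
  by_contra hne
  exact Set.disjoint_left.1 (hdisj a b hne) (hroot a) (hab ▸ hroot b)

theorem IsMinor.exists_branchGraph_eq [Finite W] {H : SimpleGraph W} {G : SimpleGraph V}
    (hm : IsMinor H G) :
    ∃ T ≤ G, T.IsAcyclic ∧ ∃ C : Finset G.Dart, #C ≤ H.edgeSet.ncard ∧
      ∃ root : W → V, branchGraph T (C : Set G.Dart) root = H := by
  classical
  obtain ⟨f, hdisj, hconn, hedge⟩ := hm
  choose root hroot using fun h => Set.nonempty_coe_sort.1 (hconn h).nonempty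
  obtain ⟨T, hTG, hT, hreach⟩ :=
    exists_isAcyclic_reachable_iff_mem (fun a b hne => hdisj a b hne) hconn hroot
  have hsame : ∀ {a b u}, u ∈ f a → u ∈ f b → a = b := fun hua hub =>
    by_contra fun hne => Set.disjoint_left.1 (hdisj _ _ hne) hua hub
  have hdart : ∀ e : H.edgeSet, ∃ c : G.Dart, ∃ d : H.Dart,
      d.edge = e ∧ c.fst ∈ f d.fst ∧ c.snd ∈ f d.snd := by
    rintro ⟨e, he⟩
    induction e using Sym2.ind with
    | h a b =>
      obtain ⟨u, hu, v, hv, huv⟩ := hedge a b he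
      exact ⟨⟨(u, v), huv⟩, ⟨(a, b), he⟩, rfl, hu, hv⟩
  choose c d hd hc using hdart
  have hsound : ∀ e a b, T.Reachable (root a) (c e).fst → T.Reachable (root b) (c e).snd →
      H.Adj a b := by
    intro e a b ha hb
    rw [hreach] at ha hb
    obtain rfl := hsame (hc e).1 ha
    obtain rfl := hsame (hc e).2 hb
    exact (d e).adj
  have := Fintype.ofFinite H.edgeSet
  refine ⟨T, hTG, hT, univ.image c, ?_, root, ?_⟩
  · rw [← Nat.card_coe_set_eq, Nat.card_eq_fintype_card, ← card_univ]
    exact card_image_le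
  ext a b
  simp only [branchGraph, fromRel_adj, coe_image, coe_univ, Set.image_univ, Set.mem_range,
    exists_exists_eq_and]
  constructor
  · rintro ⟨-, ⟨e, ha, hb⟩ | ⟨e, hb, ha⟩⟩
    · exact hsound e a b ha hb
    · exact (hsound e b a hb ha).symm
  · intro hab
    refine ⟨hab.ne, ?_⟩
    obtain ⟨hfst, hsnd⟩ := hc ⟨s(a, b), hab⟩
    simp only [← hreach] at hfst hsnd
    rcases dart_edge_eq_mk'_iff'.1 (hd ⟨s(a, b), hab⟩) with ⟨h1, h2⟩ | ⟨h1, h2⟩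
    · rw [h1] at hfst; rw [h2] at hsnd
      exact Or.inl ⟨_, hfst, hsnd⟩
    · rw [h1] at hfst; rw [h2] at hsnd
      exact Or.inr ⟨_, hfst, hsnd⟩

theorem choose_choose_le_of_forall_isMinor [Fintype W] [Fintype V] {G : SimpleGraph V}
    [DecidableRel G.Adj] (s : ℕ)
    (hminor : ∀ H : SimpleGraph W, H.edgeSet.ncard = s → IsMinor H G) :
    ((Fintype.card W).choose 2).choose s ≤
      (#G.edgeFinset + Fintype.card V).choose (Fintype.card V) *
        (2 * #G.edgeFinset + s).choose s * Fintype.card V ^ Fintype.card W := by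
  classical
  let forests := G.edgeFinset.powerset.filter (#· ≤ Fintype.card V)
  let connectors := (univ : Finset G.Dart).powerset.filter (#· ≤ s)
  let decode : Finset (Sym2 V) × Finset G.Dart × (W → V) → Finset (Sym2 W) := fun x =>
    (branchGraph (fromEdgeSet (x.1 : Set (Sym2 V))) (x.2.1 : Set G.Dart) x.2.2).edgeFinset
  have hsurj : Set.SurjOn decode ↑(forests ×ˢ connectors ×ˢ (univ : Finset (W → V)))
      ↑(powersetCard s (⊤ : SimpleGraph W).edgeFinset) := by
    intro A hA
    rw [mem_coe, mem_powersetCard] at hA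
    have hAe : (fromEdgeSet (A : Set (Sym2 W))).edgeSet = A := by
      rw [edgeSet_fromEdgeSet, sdiff_eq_left, Set.disjoint_left]
      intro e he
      simpa using hA.1 he
    obtain ⟨T, hTG, hT, C, hC, root, hH⟩ :=
      (hminor _ (by rw [hAe, Set.ncard_coe_finset, hA.2])).exists_branchGraph_eq
    refine ⟨(T.edgeFinset, C, root), ?_, ?_⟩
    · simp only [coe_product, Set.mem_prod, mem_coe, mem_filter, mem_powerset, coe_univ,
        Set.mem_univ, and_true, subset_univ, true_and, forests, connectors]
      exact ⟨⟨edgeFinset_mono hTG, hT.card_edgeFinset_le⟩,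
        hC.trans_eq (by rw [hAe, Set.ncard_coe_finset, hA.2])⟩
    · ext e
      simp [decode, hH, hAe]
  calc ((Fintype.card W).choose 2).choose s
      = #(powersetCard s (⊤ : SimpleGraph W).edgeFinset) := by
        rw [card_powersetCard, card_edgeFinset_top_eq_card_choose_two]
    _ ≤ #(forests ×ˢ connectors ×ˢ univ) := card_le_card_of_surjOn decode hsurj
    _ ≤ _ := by
      rw [card_product, card_product, card_univ, Fintype.card_fun, mul_assoc]
      gcongr
      · exact card_filter_powerset_card_le _ _
      · rw [← G.dart_card_eq_twice_card_edges, ← card_univ]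
        exact card_filter_powerset_card_le _ _

theorem exists_card_edgeSet_eq_not_isMinor [Fintype V] (G : SimpleGraph V)
    [DecidableRel G.Adj] {d : ℝ} {s : ℕ} (hd : 1 < d)
    (hE : 2 * (#G.edgeFinset : ℝ) = d * Fintype.card V) (hL : 10000 ≤ log (Fintype.card V))
    (hsn : s ≤ Fintype.card V)
    (hs : 6 * Fintype.card V * log (d + 2) < (s + 1) * log (Fintype.card V)) :
    ∃ k ≤ s, ∃ H : SimpleGraph (Fin k), H.edgeSet.ncard = s ∧ ¬IsMinor H G := by
  set L := log (Fintype.card V)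
  set k := ⌈6 * (s : ℝ) / L⌉₊ + 1
  have hk : 6 * s / L + 1 ≤ (k : ℝ) := by push_cast [k]; gcongr; exact Nat.le_ceil _
  have hk' : (k : ℝ) ≤ 6 * s / L + 2 := by
    push_cast [k]; linarith [Nat.ceil_lt_add_one (by positivity : 0 ≤ 6 * (s : ℝ) / L)]
  refine ⟨k, ?_, ?_⟩
  · have hn : 1 < (Fintype.card V : ℝ) := (log_pos_iff (by positivity)).1 (by linarith)
    have hLn : L ≤ Fintype.card V := (log_le_sub_one_of_pos (by linarith)).trans (by linarith)
    have hlogd : 1 < log (d + 2) := by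
      rw [lt_log_iff_exp_lt (by linarith)]; linarith [exp_one_lt_d9]
    have h5 : (5 : ℝ) < s := by nlinarith
    have : 6 * (s : ℝ) / L ≤ s - 2 := by rw [div_le_iff₀ (by linarith)]; nlinarith
    exact_mod_cast (hk'.trans (by linarith) : (k : ℝ) ≤ s)
  by_contra! hminor
  have := choose_choose_le_of_forall_isMinor (W := Fin k) s hminor
  rw [Fintype.card_fin] at this
  exact (choose_mul_choose_mul_pow_lt hd hE hL hsn hs hk hk').not_ge this

/-- A graph on `n` vertices with average degree `d > 1` is not `m`-minor-universal for
`m = 6 n ln(d+2) / ln n`: there is a graph with at most `m` vertices and at most `m` edges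
which is not a minor of `G`. -/
theorem not_minor_universal :
    ∃ n₀ : ℕ, ∀ (V : Type) [Fintype V] [DecidableEq V] (G : SimpleGraph V) [DecidableRel G.Adj]
      (d : ℝ),
      n₀ ≤ Fintype.card V → 1 < d →
      2 * (G.edgeFinset.card : ℝ) = d * Fintype.card V →
      ∃ (k : ℕ) (H : SimpleGraph (Fin k)),
        (k : ℝ) ≤ 6 * (Fintype.card V : ℝ) * Real.log (d + 2) / Real.log (Fintype.card V) ∧
        (H.edgeSet.ncard : ℝ) ≤
          6 * (Fintype.card V : ℝ) * Real.log (d + 2) / Real.log (Fintype.card V) ∧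
        ¬ IsMinor H G := by
  refine ⟨⌈exp 10000⌉₊, fun V _ _ G _ d hn hd hE => ?_⟩
  have hn' : exp 10000 ≤ Fintype.card V := Nat.ceil_le.1 hn
  have hL : 10000 ≤ log (Fintype.card V) :=
    (le_log_iff_exp_le ((exp_pos _).trans_le hn')).2 hn'
  set M := 6 * (Fintype.card V : ℝ) * log (d + 2) / log (Fintype.card V)
  have hM : 0 ≤ M :=
    div_nonneg (mul_nonneg (by positivity) (log_nonneg (by linarith))) (by linarith)
  rcases le_or_gt ⌊M⌋₊ (Fintype.card V) with hsn | hns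
  · have hs := (div_lt_iff₀ (by linarith)).1 (Nat.lt_floor_add_one M)
    obtain ⟨k, hks, H, hH, hnot⟩ := exists_card_edgeSet_eq_not_isMinor G hd hE hL hsn hs
    exact ⟨k, H, (Nat.cast_le.2 hks).trans (Nat.floor_le hM), hH ▸ Nat.floor_le hM, hnot⟩
  · refine ⟨Fintype.card V + 1, ⊥, ?_, by simpa using hM, fun h => ?_⟩
    · exact (Nat.cast_le.2 hns).trans (Nat.floor_le hM)
    · simpa using h.card_le
end

section
/- Let G be a graph on n vertices, let 0 < α < 1 and t ≥ 1, and suppose that |N(S)| ≥ t|S| for every S ⊆ V(G) with αn/(2t) ≤ |S| ≤ αn/t. Then there exists X ⊆ V(G) with |X| ≥ n − αn/t such that the induced subgraph G[X] is an (α/4, t/2)-expander. -/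
/-!
Take `B` maximal among the sets with `|B| ≤ αn/t` and `|N(B)| ≤ (t/2)|B|`. The hypothesis on
medium sets forces `|B| ≤ αn/(2t)`, and `X = V \ B` works: if some small `S ⊆ X` had
`|N(S) ∩ X| < (t/2)|S|`, then `B ∪ S` would again be such a set, contradicting maximality,
because `N(B ∪ S) ⊆ N(B) ∪ (N(S) \ B)`.
-/

open Finset

/-- The external neighbourhood of a vertex set `X` in a graph `G`:
`N(X) = {v ∉ X : ∃ x ∈ X, {v,x} ∈ E(G)}`. -/
def extNbhd {V : Type} [Fintype V] [DecidableEq V] (G : SimpleGraph V) [DecidableRel G.Adj]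
    (X : Finset V) : Finset V :=
  Finset.univ.filter fun v => v ∉ X ∧ ∃ x ∈ X, G.Adj v x

/-- The induced subgraph `G[X]` is an `(α, t)`-expander: every `S ⊆ X` with
`|S| ≤ α |X| / t` satisfies `|N_G(S) ∩ X| ≥ t |S|` (the external neighbourhood of `S` in
`G[X]` being `N_G(S) ∩ X`). -/
def IsExpanderOn {V : Type} [Fintype V] [DecidableEq V] (G : SimpleGraph V)
    [DecidableRel G.Adj] (X : Finset V) (α t : ℝ) : Prop :=
  ∀ S ⊆ X, (S.card : ℝ) ≤ α * X.card / t →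
    t * S.card ≤ (((extNbhd G S) ∩ X).card : ℝ)

section Expansion

variable {V : Type} [Fintype V] [DecidableEq V] (G : SimpleGraph V) [DecidableRel G.Adj]

lemma extNbhd_union_subset (B S : Finset V) :
    extNbhd G (B ∪ S) ⊆ extNbhd G B ∪ (extNbhd G S ∩ Bᶜ) := by
  intro v hv
  simp only [extNbhd, mem_filter, mem_univ, true_and, mem_union, mem_inter, mem_compl,
    not_or] at hv ⊢
  obtain ⟨⟨hvB, hvS⟩, x, hx | hx, hadj⟩ := hv
  · exact Or.inl ⟨hvB, x, hx, hadj⟩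
  · exact Or.inr ⟨⟨hvS, x, hx, hadj⟩, hvB⟩

lemma card_extNbhd_union_le (B S : Finset V) :
    ((extNbhd G (B ∪ S)).card : ℝ) ≤ (extNbhd G B).card + (extNbhd G S ∩ Bᶜ).card := by
  exact_mod_cast (card_le_card (extNbhd_union_subset G B S)).trans (card_union_le _ _)

lemma exists_maximal_card_extNbhd_le {m : ℝ} (c : ℝ) (hm : 0 ≤ m) :
    ∃ B : Finset V, (B.card : ℝ) ≤ m ∧ ((extNbhd G B).card : ℝ) ≤ c * B.card ∧
      ∀ B', B ⊂ B' → (B'.card : ℝ) ≤ m → c * B'.card < (extNbhd G B').card := by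
  let P : Finset V → Prop := fun B =>
    (B.card : ℝ) ≤ m ∧ ((extNbhd G B).card : ℝ) ≤ c * B.card
  have hP_empty : P ∅ := by simp [P, extNbhd, hm]
  obtain ⟨B, hB, hmax⟩ := exists_max_image (univ.filter P) card
    ⟨∅, mem_filter.mpr ⟨mem_univ _, hP_empty⟩⟩
  obtain ⟨hBm, hBc⟩ := (mem_filter.mp hB).2
  refine ⟨B, hBm, hBc, fun B' hBB' hB'm => ?_⟩
  by_contra! hB'c
  have := hmax B' (mem_filter.mpr ⟨mem_univ _, hB'm, hB'c⟩)
  exact (card_lt_card hBB').not_ge this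

lemma le_card_extNbhd_inter_compl_of_maximal {m c : ℝ} {B : Finset V}
    (hB : ((extNbhd G B).card : ℝ) ≤ c * B.card)
    (hmax : ∀ B', B ⊂ B' → (B'.card : ℝ) ≤ m → c * B'.card < (extNbhd G B').card)
    {S : Finset V} (hS : S ⊆ Bᶜ) (hSm : (B.card : ℝ) + S.card ≤ m) :
    c * S.card ≤ ((extNbhd G S ∩ Bᶜ).card : ℝ) := by
  by_contra! hS_small
  obtain rfl | hS_ne := S.eq_empty_or_nonempty
  · exact (hS_small.trans_le (by simp)).false
  have hdisj : Disjoint B S := disjoint_left.mpr fun _ hB hS' => mem_compl.mp (hS hS') hB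
  have hcard : ((B ∪ S).card : ℝ) = B.card + S.card := by
    rw [card_union_of_disjoint hdisj, Nat.cast_add]
  obtain ⟨x, hx⟩ := hS_ne
  have hssub : B ⊂ B ∪ S :=
    (ssubset_iff_of_subset subset_union_left).mpr ⟨x, mem_union_right B hx, mem_compl.mp (hS hx)⟩
  have hexp := hmax (B ∪ S) hssub (hcard ▸ hSm)
  have hunion := card_extNbhd_union_le G B S
  rw [hcard] at hexp
  linarith

end Expansion

theorem expander_from_medium_sets_general {V : Type} [Fintype V] [DecidableEq V]
    (G : SimpleGraph V) [DecidableRel G.Adj] (α t : ℝ)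
    (hα0 : 0 < α) (ht : 1 ≤ t)
    (hG : ∀ S : Finset V,
      α * (Fintype.card V : ℝ) / (2 * t) ≤ S.card →
      (S.card : ℝ) ≤ α * (Fintype.card V : ℝ) / t →
      t * S.card ≤ ((extNbhd G S).card : ℝ)) :
    ∃ X : Finset V,
      (Fintype.card V : ℝ) - α * (Fintype.card V : ℝ) / t ≤ X.card ∧
      IsExpanderOn G X (α / 4) (t / 2) := by
  set n : ℝ := (Fintype.card V : ℝ)
  have ht0 : 0 < t := one_pos.trans_le ht
  have hhalf : α * n / t = 2 * (α * n / (2 * t)) := by field_simp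
  have hhalf_nonneg : 0 ≤ α * n / (2 * t) := by positivity
  obtain ⟨B, hBm, hBc, hmax⟩ := exists_maximal_card_extNbhd_le G (m := α * n / t) (t / 2)
    (by positivity)
  have hB_small : (B.card : ℝ) ≤ α * n / (2 * t) := by
    by_contra! hB_large
    nlinarith [hG B hB_large.le hBm]
  have hBc_card : (Bᶜ.card : ℝ) = n - B.card := by
    rw [card_compl, Nat.cast_sub (card_le_univ B)]
  refine ⟨Bᶜ, by linarith, fun S hS hS_card => ?_⟩
  refine le_card_extNbhd_inter_compl_of_maximal G hBc hmax hS ?_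
  have hS_small : (S.card : ℝ) ≤ α * n / (2 * t) := by
    calc (S.card : ℝ) ≤ α / 4 * Bᶜ.card / (t / 2) := hS_card
      _ = α * Bᶜ.card / (2 * t) := by field_simp; ring
      _ ≤ α * n / (2 * t) := by gcongr; linarith
  linarith

/-- If every `S` with `α n / (2t) ≤ |S| ≤ α n / t` satisfies `|N(S)| ≥ t |S|`, then there is
`X` of size at least `n - α n / t` such that `G[X]` is an `(α/4, t/2)`-expander. -/
theorem expander_from_medium_sets {V : Type} [Fintype V] [DecidableEq V]
    (G : SimpleGraph V) [DecidableRel G.Adj] (α t : ℝ)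
    (hα0 : 0 < α) (hα1 : α < 1) (ht : 1 ≤ t)
    (hG : ∀ S : Finset V,
      α * (Fintype.card V : ℝ) / (2 * t) ≤ S.card →
      (S.card : ℝ) ≤ α * (Fintype.card V : ℝ) / t →
      t * S.card ≤ ((extNbhd G S).card : ℝ)) :
    ∃ X : Finset V,
      (Fintype.card V : ℝ) - α * (Fintype.card V : ℝ) / t ≤ X.card ∧
      IsExpanderOn G X (α / 4) (t / 2) :=
  expander_from_medium_sets_general G α t hα0 ht hG
end

section
/- Let G be an n-vertex d-regular graph whose adjacency matrix has all eigenvalues other than the largest one of absolute value at most λ, where λ < d/4. Then G is a (1/4, d²/(16λ²))-expander: every vertex set X ⊆ V(G) with |X| ≤ n·(16λ²)/(4d²) satisfies |N(X)| ≥ (d²/(16λ²))·|X|. -/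
/-!
The expander mixing lemma: expanding in an orthonormal eigenbasis of the adjacency matrix `A`,
the all-ones vector spans the `d`-eigenspace (every other eigenvalue is at most `λ < d`), hence
`n · e(X, S) ≤ d |X| |S| + λ n √(|X| |S|)` with `e(X, S) = ∑_{v ∈ X} |Γ(v) ∩ S|`.
For `S = X ∪ N(X)` every edge at `X` stays inside `S`, so `e(X, S) = d |X|`. If `|N(X)| < t |X|`
with `t = d² / (16 λ²) ≥ 1` and `|X| ≤ n / (4 t)`, then `|S| < 2 t |X|`, so the first term is
below `d n |X| / 2` and the second at most `d n |X| / (2 √2)`, a contradiction.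
-/

open Finset

/-- `G` is an `(α, t)`-expander: every set `X` of at most `α n / t` vertices satisfies
`|N(X)| ≥ t |X|`. -/
def IsExpander {V : Type} [Fintype V] [DecidableEq V] (G : SimpleGraph V) [DecidableRel G.Adj]
    (α t : ℝ) : Prop :=
  ∀ X : Finset V, (X.card : ℝ) ≤ α * (Fintype.card V) / t →
    t * X.card ≤ ((extNbhd G X).card : ℝ)

open scoped RealInnerProductSpace

lemma LinearMap.IsSymmetric.inner_eq_zero_of_eigenvalue_ne {E : Type*} [NormedAddCommGroup E]
    [InnerProductSpace ℝ E] {T : E →ₗ[ℝ] E} (hT : T.IsSymmetric) {u w : E} {a c : ℝ}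
    (hu : T u = a • u) (hw : T w = c • w) (hac : a ≠ c) : ⟪u, w⟫ = 0 := by
  have h : a * ⟪u, w⟫ = c * ⟪u, w⟫ := by
    rw [← real_inner_smul_left, ← real_inner_smul_right, ← hu, ← hw, hT]
  exact (mul_eq_mul_right_iff.mp h).resolve_left hac

namespace OrthonormalBasis

variable {ι E : Type*} [Fintype ι] [NormedAddCommGroup E] [InnerProductSpace ℝ E]
  (b : OrthonormalBasis ι ℝ E)

lemma sum_abs_inner_mul_abs_inner_le (f g : E) :
    ∑ j, |⟪f, b j⟫| * |⟪b j, g⟫| ≤ ‖f‖ * ‖g‖ := by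
  calc ∑ j, |⟪f, b j⟫| * |⟪b j, g⟫|
      ≤ √(∑ j, |⟪f, b j⟫| ^ 2) * √(∑ j, |⟪b j, g⟫| ^ 2) := Real.sum_mul_le_sqrt_mul_sqrt _ _ _
    _ = ‖f‖ * ‖g‖ := by
      simp only [sq_abs, b.sum_sq_inner_left, b.sum_sq_inner_right, Real.sqrt_sq (norm_nonneg _)]

lemma inner_mul_inner_eq_of_inner_eq_zero {w : E} {i₀ : ι} (hw : ∀ j ≠ i₀, ⟪b j, w⟫ = 0)
    (f g : E) : ⟪w, f⟫ * ⟪w, g⟫ = ‖w‖ ^ 2 * (⟪f, b i₀⟫ * ⟪b i₀, g⟫) := by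
  have expand (x : E) : ⟪w, x⟫ = ⟪w, b i₀⟫ * ⟪b i₀, x⟫ := by
    rw [← b.sum_inner_mul_inner, Finset.sum_eq_single i₀]
    · intro j _ hj
      rw [real_inner_comm, hw j hj, zero_mul]
    · simp
  rw [← real_inner_self_eq_norm_sq, expand f, expand g, expand w, real_inner_comm w (b i₀),
    real_inner_comm f]
  ring

variable {T : E →ₗ[ℝ] E} {μ : ι → ℝ}

lemma inner_apply_eq_sum (hb : ∀ j, T (b j) = μ j • b j) (f g : E) :
    ⟪f, T g⟫ = ∑ j, μ j * (⟪f, b j⟫ * ⟪b j, g⟫) := by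
  conv_lhs => rw [← b.sum_repr' g]
  simp only [map_sum, map_smul, hb, smul_smul, inner_sum, real_inner_smul_right]
  exact Finset.sum_congr rfl fun j _ => by ring

lemma inner_apply_le (hb : ∀ j, T (b j) = μ j • b j) {i₀ : ι} {lam : ℝ} (hlam₀ : 0 ≤ lam)
    (hlam : ∀ j ≠ i₀, |μ j| ≤ lam) (f g : E) :
    ⟪f, T g⟫ ≤ μ i₀ * (⟪f, b i₀⟫ * ⟪b i₀, g⟫) + lam * (‖f‖ * ‖g‖) := by
  classical
  rw [b.inner_apply_eq_sum hb, ← Finset.add_sum_erase _ _ (Finset.mem_univ i₀)]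
  gcongr
  calc ∑ j ∈ univ.erase i₀, μ j * (⟪f, b j⟫ * ⟪b j, g⟫)
      ≤ ∑ j ∈ univ.erase i₀, lam * (|⟪f, b j⟫| * |⟪b j, g⟫|) := by
        refine Finset.sum_le_sum fun j hj => ?_
        rw [← abs_mul]
        calc μ j * (⟪f, b j⟫ * ⟪b j, g⟫) ≤ |μ j| * |⟪f, b j⟫ * ⟪b j, g⟫| :=
              (le_abs_self _).trans_eq (abs_mul _ _)
          _ ≤ lam * |⟪f, b j⟫ * ⟪b j, g⟫| := by
              gcongr
              exact hlam j (Finset.ne_of_mem_erase hj)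
    _ ≤ ∑ j, lam * (|⟪f, b j⟫| * |⟪b j, g⟫|) :=
        Finset.sum_le_sum_of_subset_of_nonneg (Finset.erase_subset _ _) fun _ _ _ => by positivity
    _ ≤ lam * (‖f‖ * ‖g‖) := by
        rw [← Finset.mul_sum]
        exact mul_le_mul_of_nonneg_left (b.sum_abs_inner_mul_abs_inner_le f g) hlam₀

lemma sq_norm_mul_inner_apply_le (hT : T.IsSymmetric) (hb : ∀ j, T (b j) = μ j • b j) {i₀ : ι}
    {lam : ℝ} (hlam₀ : 0 ≤ lam) (hlam : ∀ j ≠ i₀, |μ j| ≤ lam) (hgap : lam < μ i₀) {w : E}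
    (hw : T w = μ i₀ • w) (f g : E) :
    ‖w‖ ^ 2 * ⟪f, T g⟫ ≤ μ i₀ * (⟪w, f⟫ * ⟪w, g⟫) + lam * ‖w‖ ^ 2 * (‖f‖ * ‖g‖) := by
  have hw_perp : ∀ j ≠ i₀, ⟪b j, w⟫ = 0 := fun j hj =>
    hT.inner_eq_zero_of_eigenvalue_ne (hb j) hw
      (((le_abs_self _).trans (hlam j hj)).trans_lt hgap).ne
  rw [b.inner_mul_inner_eq_of_inner_eq_zero hw_perp]
  have := mul_le_mul_of_nonneg_left (b.inner_apply_le hb hlam₀ hlam f g) (sq_nonneg ‖w‖)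
  linarith

end OrthonormalBasis

section
variable {V : Type} [Fintype V] [DecidableEq V]

def indicatorVec (s : Finset V) : EuclideanSpace ℝ V :=
  WithLp.toLp 2 fun v => if v ∈ s then 1 else 0

lemma inner_indicatorVec_left (s : Finset V) (x : EuclideanSpace ℝ V) :
    ⟪indicatorVec s, x⟫ = ∑ v ∈ s, x v := by
  simp [indicatorVec, PiLp.inner_apply, Finset.sum_ite_mem]

lemma inner_indicatorVec_indicatorVec (s t : Finset V) :
    ⟪indicatorVec s, indicatorVec t⟫ = #(s ∩ t) := by
  rw [inner_indicatorVec_left]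
  simp [indicatorVec]

lemma norm_indicatorVec (s : Finset V) : ‖indicatorVec s‖ = √(#s : ℝ) := by
  rw [norm_eq_sqrt_real_inner, inner_indicatorVec_indicatorVec, Finset.inter_self]

variable (G : SimpleGraph V) [DecidableRel G.Adj]

lemma toEuclideanLin_adjMatrix_indicatorVec_apply (S : Finset V) (v : V) :
    Matrix.toEuclideanLin (G.adjMatrix ℝ) (indicatorVec S) v = #(G.neighborFinset v ∩ S) := by
  simp [Matrix.toEuclideanLin, Matrix.toLpLin_apply, indicatorVec]

theorem card_mul_sum_card_neighborFinset_inter_le {d : ℕ} {lam : ℝ}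
    (hreg : G.IsRegularOfDegree d) (hA : (G.adjMatrix ℝ).IsHermitian) {i₀ : V}
    (hi₀ : hA.eigenvalues i₀ = d) (hlam₀ : 0 ≤ lam) (hlam : ∀ i ≠ i₀, |hA.eigenvalues i| ≤ lam)
    (hgap : lam < d) (X S : Finset V) :
    Fintype.card V * ∑ v ∈ X, (#(G.neighborFinset v ∩ S) : ℝ) ≤
      d * #X * #S + lam * Fintype.card V * √(#X * #S : ℝ) := by
  have hb (j : V) : Matrix.toEuclideanLin (G.adjMatrix ℝ) (hA.eigenvectorBasis j) =
      hA.eigenvalues j • hA.eigenvectorBasis j := by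
    ext v
    simpa [Matrix.toEuclideanLin, Matrix.toLpLin_apply] using
      congrFun (hA.mulVec_eigenvectorBasis j) v
  have hw : Matrix.toEuclideanLin (G.adjMatrix ℝ) (indicatorVec univ) =
      hA.eigenvalues i₀ • indicatorVec univ := by
    ext v
    simp [hi₀, hreg v, indicatorVec]
  have hgap' : lam < hA.eigenvalues i₀ := hi₀ ▸ hgap
  have hmix := OrthonormalBasis.sq_norm_mul_inner_apply_le hA.eigenvectorBasis
    (Matrix.isSymmetric_toEuclideanLin_iff.mpr hA) hb hlam₀ hlam hgap' hw
    (indicatorVec X) (indicatorVec S)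
  simp only [inner_indicatorVec_indicatorVec, univ_inter] at hmix
  simp only [inner_indicatorVec_left, toEuclideanLin_adjMatrix_indicatorVec_apply,
    norm_indicatorVec, card_univ, hi₀, Real.sq_sqrt (Nat.cast_nonneg _),
    ← Real.sqrt_mul (Nat.cast_nonneg _)] at hmix
  linarith

lemma disjoint_extNbhd (X : Finset V) : Disjoint X (extNbhd G X) := by
  simp +contextual [Finset.disjoint_left, extNbhd]

lemma neighborFinset_subset_union_extNbhd {X : Finset V} {v : V} (hv : v ∈ X) :
    G.neighborFinset v ⊆ X ∪ extNbhd G X := by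
  intro u hu
  by_cases huX : u ∈ X
  · exact mem_union_left _ huX
  · exact mem_union_right _ <| by
      simpa [extNbhd, huX] using ⟨v, hv, G.adj_symm ((G.mem_neighborFinset v u).mp hu)⟩

end

lemma le_of_mixing_bound {d lam n x y : ℝ} (hlam : 0 < lam) (hd : 4 * lam < d)
    (hx : 0 ≤ x) (hy : 0 ≤ y) (hxn : x ≤ 1 / 4 * n / (d ^ 2 / (16 * lam ^ 2)))
    (hmix : n * (d * x) ≤ d * x * (x + y) + lam * n * √(x * (x + y))) :
    d ^ 2 / (16 * lam ^ 2) * x ≤ y := by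
  set t := d ^ 2 / (16 * lam ^ 2) with ht
  have ht_sq : 16 * lam ^ 2 * t = d ^ 2 := by rw [ht]; field_simp
  have ht_one : 1 ≤ t := by rw [ht, one_le_div (by positivity)]; nlinarith
  by_contra! hy_lt
  have hx_pos : 0 < x := by nlinarith
  have hdx : 0 < d * x := by nlinarith
  have hs : x + y < 2 * t * x := by nlinarith
  have hn : 4 * t * x ≤ n := by rw [le_div_iff₀ (by positivity)] at hxn; linarith
  have hsqrt : lam * √(x * (x + y)) < d * x / 2 := by
    refine lt_of_pow_lt_pow_left₀ 2 (by positivity) ?_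
    rw [mul_pow, Real.sq_sqrt (by positivity)]
    have h8 : lam ^ 2 * x * (2 * t * x) = (d * x) ^ 2 / 8 := by
      linear_combination x ^ 2 / 8 * ht_sq
    nlinarith [mul_lt_mul_of_pos_left hs (by positivity : 0 < lam ^ 2 * x)]
  nlinarith [mul_lt_mul_of_pos_left hs hdx, mul_le_mul_of_nonneg_left hn hdx.le,
    mul_le_mul_of_nonneg_left hsqrt.le (by linarith : 0 ≤ n)]

/-- An `(n, d, λ)`-graph with `λ < d/4` is a `(1/4, d²/(16λ²))`-expander. -/
theorem ndl_expander {V : Type} [Fintype V] [DecidableEq V]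
    (G : SimpleGraph V) [DecidableRel G.Adj] (d : ℕ) (lam : ℝ)
    (hreg : G.IsRegularOfDegree d)
    (hA : (G.adjMatrix ℝ).IsHermitian)
    (i₀ : V) (hi₀ : hA.eigenvalues i₀ = d)
    (hlam : ∀ i ≠ i₀, |hA.eigenvalues i| ≤ lam)
    (hld : lam < (d : ℝ) / 4) :
    IsExpander G (1 / 4) ((d : ℝ) ^ 2 / (16 * lam ^ 2)) := by
  intro X hX
  -- `lam = 0` gives `t = 0` through division by zero, and then there is nothing to prove.
  rcases eq_or_ne ((d : ℝ) ^ 2 / (16 * lam ^ 2)) 0 with ht | ht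
  · rw [ht, zero_mul]
    positivity
  have hd : d ≠ 0 := by rintro rfl; simp at ht
  have hlam_pos : 0 < lam := by
    have hcard : 1 < Fintype.card V := hreg i₀ ▸ G.degree_lt_card_verts i₀ |>.trans_le' <| by
      omega
    obtain ⟨j, hj⟩ := Fintype.exists_ne_of_one_lt_card hcard i₀
    refine ((abs_nonneg _).trans (hlam j hj)).lt_of_ne ?_
    rintro rfl
    simp at ht
  have hedges : ∑ v ∈ X, (#(G.neighborFinset v ∩ (X ∪ extNbhd G X)) : ℝ) = d * #X := by
    rw [sum_congr rfl fun v hv => by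
      rw [inter_eq_left.mpr (neighborFinset_subset_union_extNbhd G hv),
        G.card_neighborFinset_eq_degree, hreg v], sum_const, nsmul_eq_mul, mul_comm]
  have hmix := card_mul_sum_card_neighborFinset_inter_le G hreg hA hi₀ hlam_pos.le hlam
    (by linarith) X (X ∪ extNbhd G X)
  rw [hedges, card_union_of_disjoint (disjoint_extNbhd G X), Nat.cast_add] at hmix
  exact le_of_mixing_bound hlam_pos (by linarith) (by positivity) (by positivity) hX
    (by linarith)
end

section
/- For every graph H with at most m vertices and at most m edges, there exists a graph H' with maximum degree at most 3, at most 3m vertices, and at most 3m edges, such that H is a minor of H'. -/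
/-!
Replace every vertex `w` of `H` by a path that starts at `w` and then runs through the darts
(half-edges) leaving `w`, and join the two darts of every edge of `H`. Each vertex then has at
most two neighbours on its path and at most one partner dart, so degree at most 3; there are
`|V(H)| + 2|E(H)|` vertices and at most `2|E(H)| + |E(H)|` edges, and the paths are branch sets
of an `H`-minor.
-/

open Finset

open Function

namespace SimpleGraph

section fromEdgeSet

variable {α V : Type*}

theorem ncard_edgeSet_fromEdgeSet_range_le [Finite α] (f : α → Sym2 V) :
    (fromEdgeSet (Set.range f)).edgeSet.ncard ≤ Nat.card α := by
  rw [edgeSet_fromEdgeSet, ← Set.image_univ, ← Set.ncard_univ α]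
  exact (Set.ncard_le_ncard Set.sdiff_subset (Set.toFinite _)).trans Set.ncard_image_le

theorem ncard_neighborSet_fromEdgeSet_range_le {p q : α → V} (hp : Injective p)
    (hq : Injective q) (v : V) :
    ((fromEdgeSet (Set.range fun a => s(p a, q a))).neighborSet v).ncard ≤ 2 := by
  have hsub : (fromEdgeSet (Set.range fun a => s(p a, q a))).neighborSet v ⊆
      q '' (p ⁻¹' {v}) ∪ p '' (q ⁻¹' {v}) := by
    rintro w ⟨⟨a, ha⟩, -⟩
    rcases Sym2.eq_iff.mp ha with ⟨hv, hw⟩ | ⟨hw, hv⟩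
    exacts [Or.inl ⟨a, hv, hw⟩, Or.inr ⟨a, hv, hw⟩]
  have hone {f g : α → V} (hf : Injective f) : (g '' (f ⁻¹' {v})).Subsingleton :=
    (Set.subsingleton_singleton.preimage hf).image g
  calc _ ≤ _ := Set.ncard_le_ncard hsub ((hone hp).finite.union (hone hq).finite)
    _ ≤ _ := Set.ncard_union_le _ _
    _ ≤ 1 + 1 := add_le_add ((Set.ncard_le_one (hone hp).finite).mpr (hone hp))
        ((Set.ncard_le_one (hone hq).finite).mpr (hone hq))

end fromEdgeSet

section fiberPath

variable {α β : Type*} (π : α → β)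

def fiberBranch (b : β) : Set (β ⊕ α) := insert (.inl b) (.inr '' {a | π a = b})

theorem disjoint_fiberBranch {b b' : β} (h : b ≠ b') :
    Disjoint (fiberBranch π b) (fiberBranch π b') := by
  rw [Set.disjoint_left]
  rintro _ (rfl | ⟨a, rfl, rfl⟩) (h' | ⟨a', ha', h'⟩)
  all_goals simp_all

variable [Finite α]

noncomputable def fiberEquiv (b : β) : {a // π a = b} ≃ Fin (Nat.card {a // π a = b}) :=
  Finite.equivFin _

noncomputable def fiberIndex (a : α) : ℕ := fiberEquiv π (π a) ⟨a, rfl⟩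

theorem fiberIndex_eq_fiberEquiv {b : β} (x : {a // π a = b}) :
    fiberIndex π x.1 = fiberEquiv π b x := by
  obtain ⟨a, rfl⟩ := x
  rfl

variable {π}

theorem eq_of_fiberIndex_eq {a a' : α} (h : π a = π a')
    (hi : fiberIndex π a = fiberIndex π a') : a = a' := by
  have hi' := hi.trans (fiberIndex_eq_fiberEquiv π ⟨a', h.symm⟩)
  exact congrArg Subtype.val ((fiberEquiv π (π a)).injective (Fin.ext hi'))

variable (π)

/-- Over each `b` the path runs `inl b, inr a₀, inr a₁, …` through the fiber of `π` in the order
of `fiberIndex`; `fiberPathPred π a` is the vertex preceding `inr a`. -/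
noncomputable def fiberPathPred (a : α) : β ⊕ α :=
  if fiberIndex π a = 0 then .inl (π a)
  else .inr ((fiberEquiv π (π a)).symm
    ⟨fiberIndex π a - 1, (Nat.sub_le _ 1).trans_lt (fiberEquiv π (π a) ⟨a, rfl⟩).isLt⟩).1

theorem fiberPathPred_cases (a : α) :
    (fiberIndex π a = 0 ∧ fiberPathPred π a = .inl (π a)) ∨
      ∃ a', π a' = π a ∧ fiberIndex π a' + 1 = fiberIndex π a ∧ fiberPathPred π a = .inr a' := by
  unfold fiberPathPred
  split_ifs with h
  · exact Or.inl ⟨h, rfl⟩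
  · refine Or.inr ⟨_, ((fiberEquiv π (π a)).symm _).prop, ?_, rfl⟩
    rw [fiberIndex_eq_fiberEquiv, Equiv.apply_symm_apply, Fin.val_mk]
    omega

theorem fiberPathPred_injective : Injective (fiberPathPred π) := by
  intro a a' h
  rcases fiberPathPred_cases π a with ⟨ha0, ha⟩ | ⟨b, hb, hab, ha⟩ <;>
    rcases fiberPathPred_cases π a' with ⟨ha0', ha'⟩ | ⟨b', hb', hab', ha'⟩ <;>
    rw [ha, ha'] at h <;> simp only [Sum.inl.injEq, Sum.inr.injEq, reduceCtorEq] at h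
  · exact eq_of_fiberIndex_eq h (ha0.trans ha0'.symm)
  · subst h
    exact eq_of_fiberIndex_eq (hb.symm.trans hb') (hab.symm.trans hab')

theorem fiberPathPred_ne_inr (a : α) : fiberPathPred π a ≠ .inr a := by
  rcases fiberPathPred_cases π a with ⟨-, ha⟩ | ⟨b, -, hab, ha⟩ <;> rw [ha]
  · exact Sum.inl_ne_inr
  · rintro ⟨⟩
    omega

noncomputable def fiberPathGraph : SimpleGraph (β ⊕ α) :=
  fromEdgeSet (Set.range fun a => s(fiberPathPred π a, .inr a))

theorem fiberPathGraph_adj_fiberPathPred (a : α) :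
    (fiberPathGraph π).Adj (fiberPathPred π a) (.inr a) :=
  (fromEdgeSet_adj _).mpr ⟨⟨a, rfl⟩, fiberPathPred_ne_inr π a⟩

theorem connected_induce_fiberBranch {G : SimpleGraph (β ⊕ α)} (hG : fiberPathGraph π ≤ G)
    (b : β) : (G.induce (fiberBranch π b)).Connected := by
  have root : .inl b ∈ fiberBranch π b := Set.mem_insert _ _
  have reach : ∀ a (ha : π a = b),
      (G.induce (fiberBranch π b)).Reachable ⟨_, root⟩ ⟨.inr a, .inr ⟨a, ha, rfl⟩⟩ := by
    intro a ha
    induction hn : fiberIndex π a using Nat.strong_induction_on generalizing a with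
    | _ n ih =>
    have hadj := hG (fiberPathGraph_adj_fiberPathPred π a)
    rcases fiberPathPred_cases π a with ⟨-, hpred⟩ | ⟨a', ha', hlt, hpred⟩ <;>
      rw [hpred] at hadj
    · subst ha
      exact Adj.reachable (G := G.induce _) hadj
    · exact (ih _ (by omega) a' (ha'.trans ha) rfl).trans (Adj.reachable (G := G.induce _) hadj)
  rw [connected_iff]
  refine ⟨?_, ⟨_, root⟩⟩
  suffices ∀ x, (G.induce (fiberBranch π b)).Reachable ⟨_, root⟩ x from
    fun x y => (this x).symm.trans (this y)
  rintro ⟨_, rfl | ⟨a, ha, rfl⟩⟩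
  exacts [.rfl, reach a ha]

end fiberPath

section pathExpansion

variable {W : Type*} (H : SimpleGraph W)

instance Dart.finite [Finite W] : Finite H.Dart := Finite.of_injective _ Dart.toProd_injective

def dartMatching : SimpleGraph (W ⊕ H.Dart) where
  Adj x y := ∃ d : H.Dart, x = .inr d ∧ y = .inr d.symm
  symm := ⟨by
    rintro _ _ ⟨d, rfl, rfl⟩
    exact ⟨d.symm, rfl, by rw [Dart.symm_symm]⟩⟩
  loopless := ⟨by
    rintro _ ⟨d, rfl, h⟩
    exact d.symm_ne (Sum.inr_injective h).symm⟩

theorem ncard_neighborSet_dartMatching_le (x : W ⊕ H.Dart) :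
    (H.dartMatching.neighborSet x).ncard ≤ 1 := by
  have hs : (H.dartMatching.neighborSet x).Subsingleton := by
    rintro _ ⟨d, rfl, rfl⟩ _ ⟨d', hd, rfl⟩
    rw [Sum.inr_injective hd]
  exact (Set.ncard_le_one hs.finite).mpr hs

theorem ncard_edgeSet_dartMatching_le [Finite W] :
    H.dartMatching.edgeSet.ncard ≤ H.edgeSet.ncard := by
  refine Set.ncard_le_ncard_of_injOn (Sym2.map (Sum.elim id fun d => d.fst)) ?_ ?_ (Set.toFinite _)
  · rintro e he
    induction e using Sym2.ind with | _ x y => ?_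
    obtain ⟨d, rfl, rfl⟩ := he
    simp
  · rintro e he e' he'
    induction e using Sym2.ind with | _ x y => ?_
    induction e' using Sym2.ind with | _ x' y' => ?_
    obtain ⟨d, rfl, rfl⟩ := he
    obtain ⟨d', rfl, rfl⟩ := he'
    intro h
    have hd : d.edge = d'.edge := by simpa [Dart.edge] using h
    rcases (dart_edge_eq_iff d d').mp hd with rfl | rfl
    · rfl
    · rw [Dart.symm_symm, Sym2.eq_swap]

noncomputable def pathExpansion [Finite W] : SimpleGraph (W ⊕ H.Dart) :=
  fiberPathGraph (fun d : H.Dart => d.fst) ⊔ H.dartMatching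

theorem ncard_neighborSet_pathExpansion_le [Finite W] (x : W ⊕ H.Dart) :
    (H.pathExpansion.neighborSet x).ncard ≤ 3 := by
  rw [pathExpansion, neighborSet_sup]
  calc _ ≤ _ := Set.ncard_union_le _ _
    _ ≤ 2 + 1 := add_le_add
        (ncard_neighborSet_fromEdgeSet_range_le (fiberPathPred_injective _) Sum.inr_injective x)
        (H.ncard_neighborSet_dartMatching_le x)

theorem natCard_dart_eq_two_mul_ncard_edgeSet [Finite W] :
    Nat.card H.Dart = 2 * H.edgeSet.ncard := by
  classical
  have := Fintype.ofFinite W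
  rw [Nat.card_eq_fintype_card, dart_card_eq_twice_card_edges, ← coe_edgeFinset,
    Set.ncard_coe_finset]

theorem ncard_edgeSet_pathExpansion_le [Finite W] :
    H.pathExpansion.edgeSet.ncard ≤ 3 * H.edgeSet.ncard := by
  rw [pathExpansion, edgeSet_sup]
  calc _ ≤ _ := Set.ncard_union_le _ _
    _ ≤ Nat.card H.Dart + H.edgeSet.ncard :=
        add_le_add (ncard_edgeSet_fromEdgeSet_range_le _) H.ncard_edgeSet_dartMatching_le
    _ = 3 * H.edgeSet.ncard := by rw [natCard_dart_eq_two_mul_ncard_edgeSet]; ring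

end pathExpansion

namespace Iso

variable {V V' : Type*} {G : SimpleGraph V} {G' : SimpleGraph V'}

theorem ncard_edgeSet_eq (φ : G ≃g G') : G.edgeSet.ncard = G'.edgeSet.ncard := by
  rw [← Nat.card_coe_set_eq, ← Nat.card_coe_set_eq]
  exact Nat.card_congr φ.mapEdgeSet

theorem ncard_neighborSet_eq (φ : G ≃g G') (v : V) :
    (G.neighborSet v).ncard = (G'.neighborSet (φ v)).ncard := by
  rw [← Nat.card_coe_set_eq, ← Nat.card_coe_set_eq]
  exact Nat.card_congr (φ.mapNeighborSet v)

end Iso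

end SimpleGraph

open SimpleGraph

theorem isMinor_pathExpansion {W : Type} [Finite W] (H : SimpleGraph W) :
    IsMinor H H.pathExpansion := by
  refine ⟨fiberBranch fun d : H.Dart => d.fst, fun _ _ => disjoint_fiberBranch _,
    connected_induce_fiberBranch _ le_sup_left, fun u v huv => ?_⟩
  let d : H.Dart := ⟨(u, v), huv⟩
  exact ⟨.inr d, .inr ⟨d, rfl, rfl⟩, .inr d.symm, .inr ⟨d.symm, rfl, rfl⟩,
    Or.inr ⟨d, rfl, rfl⟩⟩

theorem IsMinor.map {W V V' : Type} {H : SimpleGraph W} {G : SimpleGraph V}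
    {G' : SimpleGraph V'} (hHG : IsMinor H G) (φ : G →g G') (hφ : Function.Injective φ) :
    IsMinor H G' := by
  obtain ⟨B, hdisj, hconn, hadj⟩ := hHG
  refine ⟨fun w => φ '' B w, fun w w' hne => (Set.disjoint_image_iff hφ).mpr (hdisj w w' hne),
    fun w => ?_, fun w w' hww' => ?_⟩
  · exact (hconn w).map (induceHom φ (Set.mapsTo_image φ (B w)))
      (Set.surjective_mapsTo_image_restrict _ _)
  · obtain ⟨u, hu, v, hv, huv⟩ := hadj w w' hww'
    exact ⟨φ u, Set.mem_image_of_mem φ hu, φ v, Set.mem_image_of_mem φ hv, φ.map_adj huv⟩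

/-- Every graph with at most `m` vertices and at most `m` edges is a minor of a graph of
maximum degree at most `3` with at most `3m` vertices and at most `3m` edges. -/
theorem minor_of_max_degree_three (m : ℕ) (W : Type) [Fintype W] (H : SimpleGraph W)
    (hv : Fintype.card W ≤ m) (he : H.edgeSet.ncard ≤ m) :
    ∃ (k : ℕ) (H' : SimpleGraph (Fin k)),
      k ≤ 3 * m ∧ H'.edgeSet.ncard ≤ 3 * m ∧
      (∀ v, (H'.neighborSet v).ncard ≤ 3) ∧
      IsMinor H H' := by
  let φ := Iso.map (Finite.equivFin (W ⊕ H.Dart)) H.pathExpansion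
  refine ⟨_, _, ?_, ?_, fun v => ?_, (isMinor_pathExpansion H).map φ.toHom φ.injective⟩
  · rw [Nat.card_sum, natCard_dart_eq_two_mul_ncard_edgeSet, Nat.card_eq_fintype_card]
    omega
  · rw [← φ.ncard_edgeSet_eq]
    have := ncard_edgeSet_pathExpansion_le H
    omega
  · rw [← φ.apply_symm_apply v, ← φ.ncard_neighborSet_eq]
    exact ncard_neighborSet_pathExpansion_le H _
end
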